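/- arXiv:2502.20203 — 2 statements merged into one kernel-verified Lean document; each statement's English description precedes it below -/
import Mathlib

section
/- If η_{i,j} ≥ η > 0 for all commodities, then the map λ ↦ F(λ), assigning to each λ the unique maximizer of the 2η-strongly concave Lagrangian L(·, λ) over the compact convex set A, is Lipschitz continuous with constant ‖R‖_op/(2η): ‖F(λ₁) - F(λ₂)‖ ≤ (‖R‖_op/(2η))‖λ₁ - λ₂‖. -/
open Matrix

/-- Strong-concavity descent: the value at any feasible point is below the max
by at least `η * dist²`. -/
lemma descent_aux {P N : Type*} [Fintype P]
    (η : ℝ) (hη : 0 < η) (c : P → N) (ηc : N → ℝ) (hηc : ∀ n, η ≤ ηc n)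
    (A : Set (EuclideanSpace ℝ P)) (hAcv : Convex ℝ A)
    (U : EuclideanSpace ℝ P → ℝ) (hU : ConcaveOn ℝ A U)
    (H : EuclideanSpace ℝ P → ℝ) (hH : ∀ f, H f = -∑ p, ηc (c p) * (f p) ^ 2)
    (lin : EuclideanSpace ℝ P → ℝ)
    (hlinadd : ∀ x y, lin (x + y) = lin x + lin y)
    (hlinsmul : ∀ (a : ℝ) x, lin (a • x) = a * lin x)
    (g h : EuclideanSpace ℝ P) (hg : g ∈ A) (hh : h ∈ A)
    (hmax : ∀ f ∈ A, U f + H f - lin f ≤ U g + H g - lin g) :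
    U h + H h - lin h + η * ‖h - g‖ ^ 2 ≤ U g + H g - lin g := by
  have hS : ‖h - g‖ ^ 2 = ∑ p, (h p - g p) ^ 2 := by
    rw [EuclideanSpace.norm_eq, Real.sq_sqrt (by positivity)]
    simp [sq_abs]
  set S := ‖h - g‖ ^ 2 with hSdef
  have hS0 : (0 : ℝ) ≤ S := sq_nonneg _
  have main : ∀ t : ℝ, 0 < t → t ≤ 1 →
      U h + H h - lin h + η * S ≤ U g + H g - lin g + η * t * S := by
    intro t ht0 ht1
    have h1t : (0:ℝ) ≤ 1 - t := by linarith
    set x : EuclideanSpace ℝ P := (1 - t) • g + t • h with hx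
    have hxA : x ∈ A := hAcv hg hh h1t ht0.le (by ring)
    have hxp : ∀ p, x p = (1 - t) * g p + t * h p := by
      intro p; simp [hx]
    have hUx : (1 - t) * U g + t * U h ≤ U x := by
      have := hU.2 hg hh h1t ht0.le (by ring : (1 - t) + t = 1)
      simpa [smul_eq_mul] using this
    have hHx : (1 - t) * H g + t * H h + η * (t * (1 - t)) * S ≤ H x := by
      rw [hH, hH, hH, hS]
      have key : ∀ p : P,
          (1 - t) * (-(ηc (c p) * (g p) ^ 2)) + t * (-(ηc (c p) * (h p) ^ 2))
            + η * (t * (1 - t)) * (h p - g p) ^ 2 ≤ -(ηc (c p) * (x p) ^ 2) := by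
        intro p
        rw [hxp p]
        have hcp := hηc (c p)
        nlinarith [mul_nonneg (mul_nonneg (sub_nonneg.2 hcp) (mul_nonneg ht0.le h1t))
          (sq_nonneg (g p - h p))]
      calc (1 - t) * (-∑ p, ηc (c p) * (g p) ^ 2) + t * (-∑ p, ηc (c p) * (h p) ^ 2)
            + η * (t * (1 - t)) * ∑ p, (h p - g p) ^ 2
          = ∑ p, ((1 - t) * (-(ηc (c p) * (g p) ^ 2)) + t * (-(ηc (c p) * (h p) ^ 2))
              + η * (t * (1 - t)) * (h p - g p) ^ 2) := by
            simp [Finset.sum_add_distrib, Finset.mul_sum]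
        _ ≤ ∑ p, -(ηc (c p) * (x p) ^ 2) := Finset.sum_le_sum fun p _ => key p
        _ = -∑ p, ηc (c p) * (x p) ^ 2 := by simp
    have hlinx : lin x = (1 - t) * lin g + t * lin h := by
      rw [hx, hlinadd, hlinsmul, hlinsmul]
    have hmx := hmax x hxA
    have hty : t * (U h + H h - lin h + η * (1 - t) * S) ≤ t * (U g + H g - lin g) := by
      nlinarith [hmx, hUx, hHx]
    have := le_of_mul_le_mul_left (by linarith [hty] : t * (U h + H h - lin h + η * (1 - t) * S) ≤ t * (U g + H g - lin g)) ht0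
    nlinarith [this]
  have : U h + H h - lin h + η * S ≤ U g + H g - lin g := by
    apply le_of_forall_pos_le_add
    intro ε hε
    have hd : (0:ℝ) < η * S + 1 := by positivity
    set t : ℝ := min 1 (ε / (η * S + 1)) with htdef
    have ht0 : 0 < t := lt_min one_pos (by positivity)
    have ht1 : t ≤ 1 := min_le_left _ _
    have ht2 : t ≤ ε / (η * S + 1) := min_le_right _ _
    have h1 : η * t * S ≤ ε := by
      have : t * (η * S + 1) ≤ ε := by
        rw [← le_div_iff₀ hd] at *
        exact ht2
      nlinarith [ht0.le]
    linarith [main t ht0 ht1]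
  linarith

/-- If `η_{i,j} ≥ η > 0`, the map `λ ↦ F(λ)` sending `λ` to the unique
maximizer of the `2η`-strongly concave Lagrangian `L(·, λ)` over the compact
convex set `A` is Lipschitz with constant `‖R‖_op / (2η)`. -/
theorem argmax_map_lipschitz
    {E P N : Type*} [Fintype E] [Fintype P] [Fintype N]
    [DecidableEq E] [DecidableEq P]
    (R : Matrix E P ℝ) (c : P → N) (η : ℝ) (hη : 0 < η)
    (ηc : N → ℝ) (hηc : ∀ n, η ≤ ηc n)
    (A : Set (EuclideanSpace ℝ P)) (hAne : A.Nonempty) (hAcp : IsCompact A)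
    (hAcv : Convex ℝ A)
    (U : EuclideanSpace ℝ P → ℝ) (hU : ConcaveOn ℝ A U) (hUc : ContinuousOn U A)
    (H : EuclideanSpace ℝ P → ℝ)
    (hH : ∀ f, H f = -∑ p, ηc (c p) * (f p) ^ 2)
    (F : EuclideanSpace ℝ E → EuclideanSpace ℝ P)
    (hF : ∀ lam : EuclideanSpace ℝ E, F lam ∈ A ∧ ∀ f ∈ A,
      U f + H f - lam ⬝ᵥ R.mulVec f ≤ U (F lam) + H (F lam) - lam ⬝ᵥ R.mulVec (F lam))
    (opR : ℝ)
    (hopR : opR = ‖LinearMap.toContinuousLinearMap (Matrix.toEuclideanLin R)‖) :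
    ∀ lam₁ lam₂ : EuclideanSpace ℝ E,
      ‖F lam₁ - F lam₂‖ ≤ (opR / (2 * η)) * ‖lam₁ - lam₂‖ := by
  intro lam₁ lam₂
  obtain ⟨hf₁A, hf₁⟩ := hF lam₁
  obtain ⟨hf₂A, hf₂⟩ := hF lam₂
  set f₁ := F lam₁
  set f₂ := F lam₂
  have hlinadd : ∀ (lam : EuclideanSpace ℝ E) (x y : EuclideanSpace ℝ P),
      lam ⬝ᵥ R.mulVec (x + y) = lam ⬝ᵥ R.mulVec x + lam ⬝ᵥ R.mulVec y := by
    intro lam x y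
    have : R.mulVec (x + y) = R.mulVec x + R.mulVec y := by
      ext e; simp [Matrix.mulVec, dotProduct, mul_add, Finset.sum_add_distrib]
    rw [this, dotProduct_add]
  have hlinsmul : ∀ (lam : EuclideanSpace ℝ E) (a : ℝ) (x : EuclideanSpace ℝ P),
      lam ⬝ᵥ R.mulVec (a • x) = a * (lam ⬝ᵥ R.mulVec x) := by
    intro lam a x
    have : R.mulVec (a • x) = a • R.mulVec x := by
      ext e; simp [Matrix.mulVec, dotProduct, Finset.mul_sum]
      exact Finset.sum_congr rfl fun i _ => by ring
    rw [this, dotProduct_smul, smul_eq_mul]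
  have d1 := descent_aux η hη c ηc hηc A hAcv U hU H hH
    (fun f => lam₁ ⬝ᵥ R.mulVec f) (hlinadd lam₁) (hlinsmul lam₁) f₁ f₂ hf₁A hf₂A hf₁
  have d2 := descent_aux η hη c ηc hηc A hAcv U hU H hH
    (fun f => lam₂ ⬝ᵥ R.mulVec f) (hlinadd lam₂) (hlinsmul lam₂) f₂ f₁ hf₂A hf₁A hf₂
  rw [norm_sub_rev] at d2
  set d : EuclideanSpace ℝ P := f₂ - f₁ with hd
  have hkey : 2 * η * ‖d‖ ^ 2 ≤ (lam₁ - lam₂) ⬝ᵥ R.mulVec d := by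
    have heq : (lam₁ - lam₂) ⬝ᵥ R.mulVec d
        = (lam₁ ⬝ᵥ R.mulVec f₂ - lam₁ ⬝ᵥ R.mulVec f₁)
          - (lam₂ ⬝ᵥ R.mulVec f₂ - lam₂ ⬝ᵥ R.mulVec f₁) := by
      have hmv : R.mulVec d = R.mulVec f₂ - R.mulVec f₁ := by
        ext e; simp [Matrix.mulVec, dotProduct, mul_sub, Finset.sum_sub_distrib, hd]
      rw [hmv, WithLp.ofLp_sub, sub_dotProduct, dotProduct_sub, dotProduct_sub]
    rw [heq]
    simp only at d1 d2
    linarith [d1, d2]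
  have hinner : (lam₁ - lam₂) ⬝ᵥ R.mulVec d
      = @inner ℝ _ _ (lam₁ - lam₂) ((LinearMap.toContinuousLinearMap (Matrix.toEuclideanLin R)) d) := by
    simp [PiLp.inner_apply, dotProduct, Matrix.toEuclideanLin_apply, Matrix.mulVec,
      RCLike.inner_apply, mul_comm]
  have hbound : (lam₁ - lam₂) ⬝ᵥ R.mulVec d ≤ opR * ‖lam₁ - lam₂‖ * ‖d‖ := by
    rw [hinner, hopR]
    calc @inner ℝ _ _ (lam₁ - lam₂) ((LinearMap.toContinuousLinearMap (Matrix.toEuclideanLin R)) d)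
        ≤ ‖lam₁ - lam₂‖ * ‖(LinearMap.toContinuousLinearMap (Matrix.toEuclideanLin R)) d‖ :=
          real_inner_le_norm _ _
      _ ≤ ‖lam₁ - lam₂‖ * (‖LinearMap.toContinuousLinearMap (Matrix.toEuclideanLin R)‖ * ‖d‖) := by
          gcongr
          exact ContinuousLinearMap.le_opNorm _ _
      _ = ‖LinearMap.toContinuousLinearMap (Matrix.toEuclideanLin R)‖ * ‖lam₁ - lam₂‖ * ‖d‖ := by ring
  have h2 : 2 * η * ‖d‖ ^ 2 ≤ opR * ‖lam₁ - lam₂‖ * ‖d‖ := le_trans hkey hbound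
  have hnd : ‖f₁ - f₂‖ = ‖d‖ := by rw [hd, norm_sub_rev]
  rw [hnd]
  rcases eq_or_lt_of_le (norm_nonneg d) with h0 | h0
  · rw [← h0]
    have : 0 ≤ opR := hopR ▸ norm_nonneg _
    positivity
  · rw [div_mul_eq_mul_div, le_div_iff₀ (by linarith : (0:ℝ) < 2 * η)]
    nlinarith [h2]
end

section
/- (Waterfilling/KKT characterization) Fix a commodity (i,j) with concave differentiable nondecreasing utility U on [0, a], paths with prices μ_1,...,μ_K, and η > 0. A vector (f_1,...,f_K) with f_k ≥ 0 and q = Σ_k f_k ≤ a maximizes U(q) - Σ_k (f_k μ_k + η f_k²) over the constraint set if and only if there exists ν ≥ 0 with ν(q - a) = 0 such that f_k = max(0, (U'(q) - ν - μ_k)/(2η)) for every k. -/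
open Finset

/-- Perturbation lemma: if `f` is optimal then moving in direction `d` by step `t`
(while staying feasible) gives a first-order inequality. -/
lemma waterfill_pert {K : Type*} [Fintype K]
    (a : ℝ) (U : ℝ → ℝ) (μ : K → ℝ) (η : ℝ) (f : K → ℝ)
    (hopt : ∀ g : K → ℝ, (∀ k, 0 ≤ g k) → (∑ k, g k) ≤ a →
      U (∑ k, g k) - ∑ k, (g k * μ k + η * (g k) ^ 2)
        ≤ U (∑ k, f k) - ∑ k, (f k * μ k + η * (f k) ^ 2))
    (d : K → ℝ) (t : ℝ)
    (hpos : ∀ j, 0 ≤ f j + t * d j)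
    (hsum : (∑ k, f k) + t * (∑ k, d k) ≤ a) :
    U ((∑ k, f k) + t * ∑ k, d k) - U (∑ k, f k)
      ≤ t * (∑ k, d k * (μ k + 2 * η * f k)) + η * t ^ 2 * ∑ k, (d k) ^ 2 := by
  have hsum' : ∑ k, (f k + t * d k) = (∑ k, f k) + t * ∑ k, d k := by
    rw [Finset.sum_add_distrib, Finset.mul_sum]
  have h := hopt (fun j => f j + t * d j) hpos (by rw [hsum']; exact hsum)
  rw [hsum'] at h
  have expand : ∑ k, ((f k + t * d k) * μ k + η * (f k + t * d k) ^ 2)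
      = (∑ k, (f k * μ k + η * (f k) ^ 2))
        + (t * (∑ k, d k * (μ k + 2 * η * f k)) + η * t ^ 2 * ∑ k, (d k) ^ 2) := by
    rw [Finset.mul_sum, Finset.mul_sum, ← Finset.sum_add_distrib, ← Finset.sum_add_distrib]
    exact Finset.sum_congr rfl fun k _ => by ring
  rw [expand] at h
  linarith

/-- Waterfilling/KKT characterization: for a commodity with concave
differentiable nondecreasing utility `U` on `[0, a]`, path prices `μ_k`, and
`η > 0`, a feasible `f` (componentwise nonnegative with `q = Σ f_k ≤ a`)
maximizes `U(q) - Σ_k (f_k μ_k + η f_k²)` over the feasible set iff there is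
`ν ≥ 0` with `ν (q - a) = 0` and `f_k = max 0 ((U'(q) - ν - μ_k)/(2η))`. -/
theorem waterfilling_kkt
    {K : Type*} [Fintype K]
    (a : ℝ) (ha : 0 < a)
    (U : ℝ → ℝ) (U' : ℝ → ℝ)
    (hUconc : ConcaveOn ℝ (Set.Icc 0 a) U)
    (hUmono : MonotoneOn U (Set.Icc 0 a))
    (hU0 : U 0 = 0)
    (hU' : ∀ q ∈ Set.Icc 0 a, HasDerivWithinAt U (U' q) (Set.Icc 0 a) q)
    (μ : K → ℝ) (η : ℝ) (hη : 0 < η) :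
    ∀ f : K → ℝ, (∀ k, 0 ≤ f k) → (∑ k, f k) ≤ a →
      ((∀ g : K → ℝ, (∀ k, 0 ≤ g k) → (∑ k, g k) ≤ a →
          U (∑ k, g k) - ∑ k, (g k * μ k + η * (g k) ^ 2)
            ≤ U (∑ k, f k) - ∑ k, (f k * μ k + η * (f k) ^ 2))
        ↔ ∃ ν : ℝ, 0 ≤ ν ∧ ν * ((∑ k, f k) - a) = 0 ∧
            ∀ k, f k = max 0 ((U' (∑ k, f k) - ν - μ k) / (2 * η))) := by
  intro f hf hfa
  classical
  set q : ℝ := ∑ k, f k with hqdef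
  have hq0 : 0 ≤ q := Finset.sum_nonneg fun k _ => hf k
  have hqmem : q ∈ Set.Icc 0 a := ⟨hq0, hfa⟩
  have h2η : (0:ℝ) < 2 * η := by linarith
  constructor
  · intro hopt
    -- first-order conditions
    have F1 : ∀ k, 0 < f k → μ k + 2 * η * f k ≤ U' q := by
      intro k hposk
      have hfkq : f k ≤ q := Finset.single_le_sum (fun j _ => hf j) (Finset.mem_univ k)
      have hqpos : 0 < q := lt_of_lt_of_le hposk hfkq
      have hd : HasDerivWithinAt U (U' q) (Set.Iio q) q :=
        (hU' q hqmem).mono_of_mem_nhdsWithin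
          (mem_nhdsLT_iff_exists_Ico_subset.mpr
            ⟨0, hqpos, fun x hx => ⟨hx.1, le_trans hx.2.le hfa⟩⟩)
      have hslope : Filter.Tendsto (slope U q) (nhdsWithin q (Set.Iio q)) (nhds (U' q)) :=
        (hasDerivWithinAt_iff_tendsto_slope' (Set.notMem_Iio_self)).mp hd
      have htend2 : Filter.Tendsto (fun x => (μ k + 2 * η * f k) - η * (q - x))
          (nhdsWithin q (Set.Iio q)) (nhds (μ k + 2 * η * f k)) := by
        have hc : Continuous (fun x : ℝ => (μ k + 2 * η * f k) - η * (q - x)) :=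
          continuous_const.sub (continuous_const.mul (continuous_const.sub continuous_id))
        have h0 := hc.tendsto q
        simpa using h0.mono_left nhdsWithin_le_nhds
      refine le_of_tendsto_of_tendsto htend2 hslope ?_
      filter_upwards [Ico_mem_nhdsLT_of_mem (⟨by linarith, le_refl q⟩ : q ∈ Set.Ioc (q - f k) q)]
        with x hx
      have hx1 : x - q < 0 := by linarith [hx.2]
      have hd1 : ∑ j, (if j = k then (-1:ℝ) else 0) = -1 := by simp
      have hdA : ∑ j, (if j = k then (-1:ℝ) else 0) * (μ j + 2 * η * f j)
          = -(μ k + 2 * η * f k) := by simp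
      have hd2 : ∑ j, ((if j = k then (-1:ℝ) else 0)) ^ 2 = 1 := by simp
      have hpert := waterfill_pert a U μ η f hopt (fun j => if j = k then (-1:ℝ) else 0) (q - x)
        (fun j => by
          beta_reduce
          rcases eq_or_ne j k with h | h
          · subst h
            rw [if_pos rfl]
            linarith [hx.1]
          · rw [if_neg h]
            linarith [hf j])
        (by rw [hd1]; linarith [hx.2, hfa])
      rw [hd1, hdA, hd2] at hpert
      have hxx : q + (q - x) * (-1) = x := by ring
      rw [hxx] at hpert
      rw [slope_def_field, le_div_iff_of_neg hx1]
      exact le_trans hpert (le_of_eq (by ring))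
    have F2 : q < a → ∀ k, U' q ≤ μ k + 2 * η * f k := by
      intro hqa k
      have hd : HasDerivWithinAt U (U' q) (Set.Ioi q) q :=
        (hU' q hqmem).mono_of_mem_nhdsWithin
          (mem_nhdsGT_iff_exists_Ioc_subset.mpr
            ⟨a, hqa, fun x hx => ⟨le_trans hq0 hx.1.le, hx.2⟩⟩)
      have hslope : Filter.Tendsto (slope U q) (nhdsWithin q (Set.Ioi q)) (nhds (U' q)) :=
        (hasDerivWithinAt_iff_tendsto_slope' (Set.notMem_Ioi_self)).mp hd
      have htend2 : Filter.Tendsto (fun x => (μ k + 2 * η * f k) + η * (x - q))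
          (nhdsWithin q (Set.Ioi q)) (nhds (μ k + 2 * η * f k)) := by
        have hc : Continuous (fun x : ℝ => (μ k + 2 * η * f k) + η * (x - q)) :=
          continuous_const.add (continuous_const.mul (continuous_id.sub continuous_const))
        have h0 := hc.tendsto q
        simpa using h0.mono_left nhdsWithin_le_nhds
      refine le_of_tendsto_of_tendsto hslope htend2 ?_
      filter_upwards [Ioc_mem_nhdsGT_of_mem (⟨le_refl q, hqa⟩ : q ∈ Set.Ico q a)]
        with x hx
      have hx1 : 0 < x - q := by linarith [hx.1]
      have hd1 : ∑ j, (if j = k then (1:ℝ) else 0) = 1 := by simp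
      have hdA : ∑ j, (if j = k then (1:ℝ) else 0) * (μ j + 2 * η * f j)
          = μ k + 2 * η * f k := by simp
      have hd2 : ∑ j, ((if j = k then (1:ℝ) else 0)) ^ 2 = 1 := by simp
      have hpert := waterfill_pert a U μ η f hopt (fun j => if j = k then (1:ℝ) else 0) (x - q)
        (fun j => by
          beta_reduce
          rcases eq_or_ne j k with h | h
          · subst h
            rw [if_pos rfl]
            linarith [hf j, hx.1]
          · rw [if_neg h]
            linarith [hf j])
        (by rw [hd1]; linarith [hx.2])
      rw [hd1, hdA, hd2] at hpert
      have hxx : q + (x - q) * 1 = x := by ring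
      rw [hxx] at hpert
      rw [slope_def_field, div_le_iff₀ hx1]
      exact le_trans hpert (le_of_eq (by ring))
    have F3 : ∀ k l, 0 < f k → μ k + 2 * η * f k ≤ μ l + 2 * η * f l := by
      intro k l hposk
      by_cases hkl : k = l
      · subst hkl; exact le_refl _
      set d : K → ℝ := fun j => (if j = l then (1:ℝ) else 0) - (if j = k then 1 else 0) with hddef
      have hd1 : ∑ j, d j = 0 := by
        rw [hddef, Finset.sum_sub_distrib]; simp
      have hdA : ∑ j, d j * (μ j + 2 * η * f j)
          = (μ l + 2 * η * f l) - (μ k + 2 * η * f k) := by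
        rw [hddef]
        simp only [sub_mul, ite_mul, one_mul, zero_mul]
        rw [Finset.sum_sub_distrib]
        simp
      set M : ℝ := ∑ j, (d j) ^ 2 with hMdef
      have hM : 0 ≤ M := Finset.sum_nonneg fun j _ => sq_nonneg _
      have hstep : ∀ t ∈ Set.Ioc (0:ℝ) (f k),
          0 ≤ ((μ l + 2 * η * f l) - (μ k + 2 * η * f k)) + η * t * M := by
        intro t ht
        have hpert := waterfill_pert a U μ η f hopt d t
          (fun j => by
            beta_reduce
            rcases eq_or_ne j k with h2 | h2
            · subst h2
              have hjl : j ≠ l := hkl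
              simp only [hddef]
              rw [if_neg hjl]
              norm_num
              linarith [ht.2]
            · rcases eq_or_ne j l with h1 | h1
              · subst h1
                simp only [hddef]
                rw [if_neg h2]
                norm_num
                linarith [hf j, ht.1]
              · simp only [hddef]
                rw [if_neg h1, if_neg h2]
                norm_num
                linarith [hf j])
          (by rw [hd1]; simpa using hfa)
        rw [hd1, hdA, ← hMdef] at hpert
        rw [show q + t * (0:ℝ) = q by ring] at hpert
        have hpert2 : (0:ℝ) ≤ t * ((μ l + 2 * η * f l) - (μ k + 2 * η * f k)) + η * t ^ 2 * M := by
          linarith [hpert]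
        have heq : (t * ((μ l + 2 * η * f l) - (μ k + 2 * η * f k)) + η * t ^ 2 * M) / t
            = ((μ l + 2 * η * f l) - (μ k + 2 * η * f k)) + η * t * M := by
          rw [div_eq_iff (ne_of_gt ht.1)]
          ring
        have h0 : 0 ≤ (t * ((μ l + 2 * η * f l) - (μ k + 2 * η * f k)) + η * t ^ 2 * M) / t :=
          div_nonneg hpert2 ht.1.le
        rw [heq] at h0
        exact h0
      have htend : Filter.Tendsto
          (fun t : ℝ => ((μ l + 2 * η * f l) - (μ k + 2 * η * f k)) + η * t * M)
          (nhdsWithin 0 (Set.Ioi 0))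
          (nhds ((μ l + 2 * η * f l) - (μ k + 2 * η * f k))) := by
        have hc : Continuous
            (fun t : ℝ => ((μ l + 2 * η * f l) - (μ k + 2 * η * f k)) + η * t * M) :=
          continuous_const.add ((continuous_const.mul continuous_id).mul continuous_const)
        have h0 := hc.tendsto 0
        simpa using h0.mono_left nhdsWithin_le_nhds
      have hfin := ge_of_tendsto htend
        (by filter_upwards [Ioc_mem_nhdsGT_of_mem (⟨le_refl 0, hposk⟩ : (0:ℝ) ∈ Set.Ico 0 (f k))]
            with t ht
            exact hstep t ht)
      linarith
    rcases lt_or_eq_of_le hfa with hqa | hqa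
    · refine ⟨0, le_refl 0, by ring, fun k => ?_⟩
      rcases (hf k).lt_or_eq with hpos | h0
      · have h1 := F1 k hpos
        have h2 := F2 hqa k
        have hval : (U' q - 0 - μ k) / (2 * η) = f k := by
          field_simp
          linarith
        rw [hval, max_eq_right (hf k)]
      · have h2 := F2 hqa k
        have hle : (U' q - 0 - μ k) / (2 * η) ≤ 0 := by
          rw [div_le_iff₀ h2η]
          rw [← h0] at h2
          linarith
        rw [max_eq_left hle]
        exact h0.symm
    · have hex : ∃ k0, 0 < f k0 := by
        by_contra hno
        push_neg at hno
        have : q = 0 := le_antisymm (by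
          rw [hqdef]
          exact Finset.sum_nonpos fun k _ => hno k) hq0
        rw [this] at hqa
        exact absurd hqa.symm (ne_of_gt ha)
      obtain ⟨k0, hk0⟩ := hex
      refine ⟨U' q - (μ k0 + 2 * η * f k0), by linarith [F1 k0 hk0], by rw [hqa]; ring,
        fun k => ?_⟩
      rcases (hf k).lt_or_eq with hpos | h0
      · have hAle := F3 k k0 hpos
        have hAge := F3 k0 k hk0
        have hval : (U' q - (U' q - (μ k0 + 2 * η * f k0)) - μ k) / (2 * η) = f k := by
          field_simp
          linarith
        rw [hval, max_eq_right (hf k)]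
      · have hAge := F3 k0 k hk0
        rw [← h0] at hAge
        have hle : (U' q - (U' q - (μ k0 + 2 * η * f k0)) - μ k) / (2 * η) ≤ 0 := by
          rw [div_le_iff₀ h2η]
          linarith
        rw [max_eq_left hle]
        exact h0.symm
  · rintro ⟨ν, hν, hslack, hfeq⟩ g hg hga
    set p : ℝ := ∑ k, g k with hpdef
    have hp0 : 0 ≤ p := Finset.sum_nonneg fun k _ => hg k
    have hpmem : p ∈ Set.Icc 0 a := ⟨hp0, hga⟩
    -- gradient inequality
    have grad : U p - U q ≤ U' q * (p - q) := by
      rcases lt_trichotomy p q with hlt | heq | hgt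
      · have h := hUconc.le_slope_of_hasDerivWithinAt hpmem hqmem hlt (hU' q hqmem)
        rw [slope_def_field] at h
        rw [le_div_iff₀ (by linarith : (0:ℝ) < q - p)] at h
        nlinarith
      · rw [heq]; simp
      · have h := hUconc.slope_le_of_hasDerivWithinAt hqmem hpmem hgt (hU' q hqmem)
        rw [slope_def_field, div_le_iff₀ (by linarith : (0:ℝ) < p - q)] at h
        nlinarith
    -- per-coordinate inequality
    have key3 : ∀ k, (g k - f k) * (U' q - μ k - 2 * η * f k) ≤ (g k - f k) * ν := by
      intro k
      have hk := hfeq k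
      rcases le_or_gt ((U' q - ν - μ k) / (2 * η)) 0 with hle | hlt
      · rw [max_eq_left hle] at hk
        rw [div_le_iff₀ h2η] at hle
        have hgk : 0 ≤ g k - f k := by rw [hk]; linarith [hg k]
        have : U' q - μ k - 2 * η * f k ≤ ν := by rw [hk]; linarith
        exact mul_le_mul_of_nonneg_left this hgk
      · rw [max_eq_right hlt.le] at hk
        have : U' q - μ k - 2 * η * f k = ν := by
          rw [hk]
          field_simp
          ring
        rw [this]
    have hS1 : (∑ k, (g k - f k) * (U' q - μ k - 2 * η * f k)) ≤ ν * (p - q) := by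
      calc (∑ k, (g k - f k) * (U' q - μ k - 2 * η * f k))
          ≤ ∑ k, (g k - f k) * ν := Finset.sum_le_sum fun k _ => key3 k
        _ = ν * (p - q) := by
            rw [← Finset.sum_mul, Finset.sum_sub_distrib, ← hpdef, ← hqdef]
            ring
    have hS2 : ∑ k, ((g k - f k) * (μ k + 2 * η * f k))
        = (p - q) * U' q - ∑ k, (g k - f k) * (U' q - μ k - 2 * η * f k) := by
      rw [eq_sub_iff_add_eq, ← Finset.sum_add_distrib]
      have : ∑ k, ((g k - f k) * (μ k + 2 * η * f k) + (g k - f k) * (U' q - μ k - 2 * η * f k))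
          = ∑ k, (g k - f k) * U' q := Finset.sum_congr rfl fun k _ => by ring
      rw [this, ← Finset.sum_mul, Finset.sum_sub_distrib, ← hpdef, ← hqdef]
    have hcost : ∑ k, (g k * μ k + η * (g k) ^ 2) - ∑ k, (f k * μ k + η * (f k) ^ 2)
        = (∑ k, ((g k - f k) * (μ k + 2 * η * f k))) + η * ∑ k, (g k - f k) ^ 2 := by
      rw [Finset.mul_sum, ← Finset.sum_sub_distrib, ← Finset.sum_add_distrib]
      exact Finset.sum_congr rfl fun k _ => by ring
    have hsq : 0 ≤ η * ∑ k, (g k - f k) ^ 2 :=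
      mul_nonneg hη.le (Finset.sum_nonneg fun k _ => sq_nonneg _)
    have hνp : ν * (p - q) ≤ 0 := by
      have h1 : ν * q = ν * a := by nlinarith [hslack]
      have h2 : ν * p ≤ ν * a := mul_le_mul_of_nonneg_left hga hν
      nlinarith
    linarith
end
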